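/- arXiv:2102.05226 — 5 statements merged into one kernel-verified Lean document; each statement's English description precedes it below -/
import Mathlib

section
/- Let S > 1 and k > 0 be reals and let 0 < f₀ < f₁. Let x, y : ℝ → ℝ be such that for every f ∈ [f₀, f₁]: (i) 0 < y(f) < 1 and x(f) < y(f); (ii) x has derivative (y(f) − x(f))/f at f; (iii) y is differentiable at f; and (iv) the crossflow flux relation (y(f) − x(f))·(S − (S−1)·y(f)) = k·(S−1)²·y(f)·(1 − y(f)) holds. Then S·ln(y(f₀)/y(f₁)) − ln((1 − y(f₀))/(1 − y(f₁))) − k·(S−1)²·ln((y(f₀) − x(f₀))/(y(f₁) − x(f₁))) = k·(S−1)²·ln(f₀/f₁). -/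
/-! Along a solution, `S log y - log (1 - y) - K log (y - x) - K log f` (with `K = k (S-1)²`) has
derivative `y' (S/y + 1/(1-y) - K/(y-x))`, and the flux relation says exactly that
`S/y + 1/(1-y) = (S - (S-1) y) / (y (1-y)) = K / (y-x)`. So this quantity is conserved between
`f₀` and `f₁`, which is the claimed identity once the logarithms of quotients are split. -/

open Real Set

noncomputable def crossflowInvariant (S K : ℝ) (x y : ℝ → ℝ) (f : ℝ) : ℝ :=
  S * log (y f) - log (1 - y f) - K * log (y f - x f) - K * log f

theorem hasDerivAt_crossflowInvariant {S K f : ℝ} {x y : ℝ → ℝ} (hf : 0 < f)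
    (hy₀ : 0 < y f) (hy₁ : y f < 1) (hxy : x f < y f)
    (hx' : HasDerivAt x ((y f - x f) / f) f) (hy' : DifferentiableAt ℝ y f)
    (hflux : (y f - x f) * (S - (S - 1) * y f) = K * y f * (1 - y f)) :
    HasDerivAt (crossflowInvariant S K x y) 0 f := by
  have h1y : 1 - y f ≠ 0 := (sub_pos.2 hy₁).ne'
  have hyx : y f - x f ≠ 0 := (sub_pos.2 hxy).ne'
  have hdy := hy'.hasDerivAt
  have hlog_y := hdy.log hy₀.ne'
  have hlog_one_sub_y := ((hasDerivAt_const f (1 : ℝ)).sub hdy).log h1y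
  have hlog_y_sub_x := (hdy.sub hx').log hyx
  have hlog_f := hasDerivAt_log hf.ne'
  refine (((hlog_y.const_mul S).sub hlog_one_sub_y).sub (hlog_y_sub_x.const_mul K)
    |>.sub (hlog_f.const_mul K)).congr_deriv ?_
  simp only [Pi.sub_apply]
  field_simp
  linear_combination f * deriv y f * hflux

theorem eq_of_hasDerivAt_zero_on_Icc {G : ℝ → ℝ} {a b : ℝ} (hab : a ≤ b)
    (hG : ∀ t ∈ Icc a b, HasDerivAt G 0 t) : G a = G b :=
  (constant_of_has_deriv_right_zero (fun t ht => (hG t ht).continuousAt.continuousWithinAt)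
    (fun t ht => (hG t (Ico_subset_Icc_self ht)).hasDerivWithinAt) b (right_mem_Icc.2 hab)).symm

theorem stmt_1_general
    (S k f₀ f₁ : ℝ)
    (hf₀ : 0 < f₀) (hf : f₀ < f₁)
    (x y : ℝ → ℝ)
    (hy : ∀ f ∈ Set.Icc f₀ f₁, 0 < y f ∧ y f < 1)
    (hxy : ∀ f ∈ Set.Icc f₀ f₁, x f < y f)
    (hx' : ∀ f ∈ Set.Icc f₀ f₁, HasDerivAt x ((y f - x f) / f) f)
    (hydiff : ∀ f ∈ Set.Icc f₀ f₁, DifferentiableAt ℝ y f)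
    (hflux : ∀ f ∈ Set.Icc f₀ f₁,
      (y f - x f) * (S - (S - 1) * y f) = k * (S - 1) ^ 2 * y f * (1 - y f)) :
    S * Real.log (y f₀ / y f₁) - Real.log ((1 - y f₀) / (1 - y f₁))
      - k * (S - 1) ^ 2 * Real.log ((y f₀ - x f₀) / (y f₁ - x f₁))
      = k * (S - 1) ^ 2 * Real.log (f₀ / f₁) := by
  have hconserved : crossflowInvariant S (k * (S - 1) ^ 2) x y f₀ =
      crossflowInvariant S (k * (S - 1) ^ 2) x y f₁ :=
    eq_of_hasDerivAt_zero_on_Icc hf.le fun f hfI =>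
      hasDerivAt_crossflowInvariant (hf₀.trans_le hfI.1) (hy f hfI).1 (hy f hfI).2 (hxy f hfI)
        (hx' f hfI) (hydiff f hfI) (by linear_combination hflux f hfI)
  have h₀ := left_mem_Icc.2 hf.le
  have h₁ := right_mem_Icc.2 hf.le
  rw [log_div (hy f₀ h₀).1.ne' (hy f₁ h₁).1.ne',
    log_div (sub_pos.2 (hy f₀ h₀).2).ne' (sub_pos.2 (hy f₁ h₁).2).ne',
    log_div (sub_pos.2 (hxy f₀ h₀)).ne' (sub_pos.2 (hxy f₁ h₁)).ne',
    log_div hf₀.ne' (hf₀.trans hf).ne']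
  unfold crossflowInvariant at hconserved
  linarith

theorem stmt_1
    (S k f₀ f₁ : ℝ) (hS : 1 < S) (hk : 0 < k)
    (hf₀ : 0 < f₀) (hf : f₀ < f₁)
    (x y : ℝ → ℝ)
    (hy : ∀ f ∈ Set.Icc f₀ f₁, 0 < y f ∧ y f < 1)
    (hxy : ∀ f ∈ Set.Icc f₀ f₁, x f < y f)
    (hx' : ∀ f ∈ Set.Icc f₀ f₁, HasDerivAt x ((y f - x f) / f) f)
    (hydiff : ∀ f ∈ Set.Icc f₀ f₁, DifferentiableAt ℝ y f)
    (hflux : ∀ f ∈ Set.Icc f₀ f₁,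
      (y f - x f) * (S - (S - 1) * y f) = k * (S - 1) ^ 2 * y f * (1 - y f)) :
    S * Real.log (y f₀ / y f₁) - Real.log ((1 - y f₀) / (1 - y f₁))
      - k * (S - 1) ^ 2 * Real.log ((y f₀ - x f₀) / (y f₁ - x f₁))
      = k * (S - 1) ^ 2 * Real.log (f₀ / f₁) :=
  stmt_1_general S k f₀ f₁ hf₀ hf x y hy hxy hx' hydiff hflux
end

section
/- Let S, k, y be reals with k ≥ 0, y > 0 and S − (S−1)·y ≠ 0, and define X : ℝ → ℝ by X(t) = t − k·(1 + (S−1)·t − S/(S − (S−1)·t)). If X(y) > 0, then the derivative of X at y, namely 1 − k·(S−1) + k·S·(S−1)/(S − (S−1)·y)², is strictly positive. -/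
/-! Differentiating `X` gives the identity
`y · X'(y) = X(y) + k (S-1)² y² / (S - (S-1) y)²`, whose second summand is nonnegative;
so for `y > 0` the slope is positive wherever `X(y) > 0`. -/

/-- The retentate mole fraction `X(t)` of the crossflow model. -/
noncomputable def retentateFraction (S k t : ℝ) : ℝ :=
  t - k * (1 + (S - 1) * t - S / (S - (S - 1) * t))

theorem mul_retentateFraction_slope_eq (S k y : ℝ) (hden : S - (S - 1) * y ≠ 0) :
    y * (1 - k * (S - 1) + k * S * (S - 1) / (S - (S - 1) * y) ^ 2) =
      retentateFraction S k y + k * (S - 1) ^ 2 * y ^ 2 / (S - (S - 1) * y) ^ 2 := by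
  unfold retentateFraction
  -- `field_simp` only clears the denominator once it is an atom
  generalize hd : S - (S - 1) * y = d at hden ⊢
  field_simp
  subst hd
  ring

theorem stmt_6
    (S k y : ℝ) (hk : 0 ≤ k) (hy : 0 < y) (hden : S - (S - 1) * y ≠ 0)
    (X : ℝ → ℝ)
    (hX : X = fun t => t - k * (1 + (S - 1) * t - S / (S - (S - 1) * t)))
    (hXy : 0 < X y) :
    0 < 1 - k * (S - 1) + k * S * (S - 1) / (S - (S - 1) * y) ^ 2 := by
  subst hX
  have hprod : 0 < y * (1 - k * (S - 1) + k * S * (S - 1) / (S - (S - 1) * y) ^ 2) := by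
    rw [mul_retentateFraction_slope_eq S k y hden]
    exact add_pos_of_pos_of_nonneg hXy (by positivity)
  exact pos_of_mul_pos_right hprod hy.le
end

section
/- Let S > 1 and x be reals, let U ⊆ ℝ be an open set containing u₀, and let y, k : ℝ → ℝ satisfy, for every u ∈ U, the relation (y(u) − x)·(S − (S−1)·y(u)) = k(u)·(S−1)²·y(u)·(1 − y(u)), with 0 < y(u₀) < 1. If y has derivative y′ at u₀ and k has derivative k′ at u₀, then y′·( S·x/y(u₀)² + (1−x)/(1−y(u₀))² ) = k′·(S−1)². -/
/-!
Dividing the flux relation by `y (1 - y)` (legitimate near `u₀`, where `y` stays away from `0` and `1` by continuity)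
gives, by partial fractions, `(S - 1) - S x / y + (1 - x) / (1 - y) = k (S - 1)²` on a
neighbourhood of `u₀`. The left side is a function of `y` alone, with derivative
`S x / y² + (1 - x) / (1 - y)²`, so the chain rule and uniqueness of derivatives give the identity.
-/

noncomputable def fluxQuotient (S x t : ℝ) : ℝ :=
  (S - 1) - S * x / t + (1 - x) / (1 - t)

theorem fluxQuotient_eq_of_flux_eq {S x t c : ℝ} (ht₀ : t ≠ 0) (ht₁ : t ≠ 1)
    (h : (t - x) * (S - (S - 1) * t) = c * t * (1 - t)) :
    fluxQuotient S x t = c := by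
  have ht₁' : 1 - t ≠ 0 := sub_ne_zero.mpr ht₁.symm
  unfold fluxQuotient
  field_simp
  linear_combination h

theorem hasDerivAt_fluxQuotient (S x : ℝ) {t : ℝ} (ht₀ : t ≠ 0) (ht₁ : t ≠ 1) :
    HasDerivAt (fluxQuotient S x) (S * x / t ^ 2 + (1 - x) / (1 - t) ^ 2) t := by
  have ht₁' : 1 - t ≠ 0 := sub_ne_zero.mpr ht₁.symm
  have hinv₀ : HasDerivAt (fun s => s⁻¹) (-(t ^ 2)⁻¹) t := hasDerivAt_inv ht₀
  have hinv₁ : HasDerivAt (fun s => (1 - s)⁻¹) (-(-1) / (1 - t) ^ 2) t :=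
    ((hasDerivAt_id t).const_sub 1).inv ht₁'
  have h := ((hinv₀.const_mul (S * x)).const_sub (S - 1)).add (hinv₁.const_mul (1 - x))
  have hfun : fluxQuotient S x =
      (fun s => S - 1 - S * x * s⁻¹) + fun s => (1 - x) * (1 - s)⁻¹ := by
    ext s
    simp only [fluxQuotient, Pi.add_apply, div_eq_mul_inv]
  rw [hfun]
  exact h.congr_deriv (by field_simp)

theorem stmt_11_general
    (S x : ℝ)
    (U : Set ℝ) (hU : IsOpen U) (u₀ : ℝ) (hu₀ : u₀ ∈ U)
    (y k : ℝ → ℝ)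
    (hrel : ∀ u ∈ U,
      (y u - x) * (S - (S - 1) * y u) = k u * (S - 1) ^ 2 * y u * (1 - y u))
    (hy0 : 0 < y u₀) (hy1 : y u₀ < 1)
    (y' k' : ℝ)
    (hy' : HasDerivAt y y' u₀) (hk' : HasDerivAt k k' u₀) :
    y' * (S * x / (y u₀) ^ 2 + (1 - x) / (1 - y u₀) ^ 2) = k' * (S - 1) ^ 2 := by
  have hquot : (fun u => k u * (S - 1) ^ 2) =ᶠ[nhds u₀] fluxQuotient S x ∘ y := by
    filter_upwards [hU.mem_nhds hu₀, hy'.continuousAt.eventually_ne hy0.ne',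
      hy'.continuousAt.eventually_ne hy1.ne] with u huU hyu₀ hyu₁
    exact (fluxQuotient_eq_of_flux_eq hyu₀ hyu₁ (hrel u huU)).symm
  have hcomp := (hasDerivAt_fluxQuotient S x hy0.ne' hy1.ne).comp u₀ hy'
  rw [mul_comm]
  exact (hcomp.congr_of_eventuallyEq hquot).unique (hk'.mul_const _)

theorem stmt_11
    (S x : ℝ) (hS : 1 < S)
    (U : Set ℝ) (hU : IsOpen U) (u₀ : ℝ) (hu₀ : u₀ ∈ U)
    (y k : ℝ → ℝ)
    (hrel : ∀ u ∈ U,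
      (y u - x) * (S - (S - 1) * y u) = k u * (S - 1) ^ 2 * y u * (1 - y u))
    (hy0 : 0 < y u₀) (hy1 : y u₀ < 1)
    (y' k' : ℝ)
    (hy' : HasDerivAt y y' u₀) (hk' : HasDerivAt k k' u₀) :
    y' * (S * x / (y u₀) ^ 2 + (1 - x) / (1 - y u₀) ^ 2) = k' * (S - 1) ^ 2 :=
  stmt_11_general S x U hU u₀ hu₀ y k hrel hy0 hy1 y' k' hy' hk'
end

section
/- Let S > 1 and x ∈ [0,1] be reals, let U ⊆ ℝ be an open set containing u₀, and let y, k : ℝ → ℝ satisfy, for every u ∈ U, the relation (y(u) − x)·(S − (S−1)·y(u)) = k(u)·(S−1)²·y(u)·(1 − y(u)), with 0 < y(u₀) < 1. If y has derivative y′ at u₀ and k has derivative k′ at u₀ with k′ ≥ 0, then y′ ≥ 0. -/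
open Filter Topology

/- Differentiating the flux relation gives `y' · A = k' (S-1)² y (1-y)`, where `A` is the partial
derivative of the relation in `y`. Multiplying by `y (1-y)` and using the relation itself turns
`A · y (1-y)` into `S x (1-y)² + (1-x) y²`, which is positive for `0 < y < 1`; hence `y'` has the
sign of `k'`. -/

lemma flux_weight_pos {S x a : ℝ} (hS : 0 < S) (hx0 : 0 ≤ x) (hx1 : x ≤ 1)
    (ha0 : 0 < a) (ha1 : a < 1) :
    0 < S * x * (1 - a) ^ 2 + (1 - x) * a ^ 2 := by
  have h1a : 0 < 1 - a := sub_pos.2 ha1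
  rcases hx1.lt_or_eq with hx | rfl
  · have : 0 < 1 - x := sub_pos.2 hx
    positivity
  · positivity

/-- The derivative relation `hderiv` is the flux relation differentiated by the product rule. -/
lemma mul_flux_weight_eq {S x a c y' k' : ℝ}
    (hrel : (a - x) * (S - (S - 1) * a) = c * (S - 1) ^ 2 * a * (1 - a))
    (hderiv : y' * (S - (S - 1) * a) + (a - x) * -((S - 1) * y') =
      (k' * (S - 1) ^ 2 * a + c * (S - 1) ^ 2 * y') * (1 - a) + c * (S - 1) ^ 2 * a * -y') :
    y' * (S * x * (1 - a) ^ 2 + (1 - x) * a ^ 2) = k' * (S - 1) ^ 2 * (a * (1 - a)) ^ 2 := by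
  linear_combination a * (1 - a) * hderiv - y' * (1 - 2 * a) * hrel

theorem stmt_12
    (S x : ℝ) (hS : 1 < S) (hx0 : 0 ≤ x) (hx1 : x ≤ 1)
    (U : Set ℝ) (hU : IsOpen U) (u₀ : ℝ) (hu₀ : u₀ ∈ U)
    (y k : ℝ → ℝ)
    (hrel : ∀ u ∈ U,
      (y u - x) * (S - (S - 1) * y u) = k u * (S - 1) ^ 2 * y u * (1 - y u))
    (hy0 : 0 < y u₀) (hy1 : y u₀ < 1)
    (y' k' : ℝ)
    (hy' : HasDerivAt y y' u₀) (hk' : HasDerivAt k k' u₀) (hk'0 : 0 ≤ k') :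
    0 ≤ y' := by
  have hrel_near : (fun u => (y u - x) * (S - (S - 1) * y u)) =ᶠ[𝓝 u₀]
      fun u => k u * (S - 1) ^ 2 * y u * (1 - y u) :=
    eventually_of_mem (hU.mem_nhds hu₀) hrel
  have hderiv := ((hy'.sub_const x).mul ((hy'.const_mul (S - 1)).const_sub S)).unique
    (hrel_near.hasDerivAt_iff.2 (((hk'.mul_const _).mul hy').mul (hy'.const_sub 1)))
  have hslope := mul_flux_weight_eq (hrel u₀ hu₀) hderiv
  have hweight := flux_weight_pos (zero_lt_one.trans hS) hx0 hx1 hy0 hy1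
  refine nonneg_of_mul_nonneg_left ?_ hweight
  rw [hslope]
  positivity
end

section
/- Let S > 1 and define g : ℝ → ℝ by g(y) = 1 + (S−1)·y − S/(S − (S−1)·y), and set y* := (S − √S)/(S−1). Then g is strictly monotone increasing on the interval [0, y*] and strictly monotone decreasing on the interval [y*, 1]. -/
/-!
Writing `D y = S - (S - 1) y`, one has `g y = 1 + S - (D y + S / D y)`. The affine map `D` is
strictly decreasing, sends `y*` to `√S` and `[0, 1]` into `[1, S]`, while `t ↦ t + S / t`
decreases on `(0, √S]` and increases on `[√S, ∞)`; composing gives the two monotonicity claims.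
-/

open Set

lemma add_div_sub_add_div_eq (c : ℝ) {s t : ℝ} (hs : s ≠ 0) (ht : t ≠ 0) :
    (t + c / t) - (s + c / s) = (t - s) * (s * t - c) / (s * t) := by
  field_simp
  ring

lemma strictAntiOn_add_div_Ioc_sqrt {c : ℝ} (hc : 0 ≤ c) :
    StrictAntiOn (fun t => t + c / t) (Ioc 0 √c) := by
  intro s ⟨hs, _⟩ t ⟨ht, ht_le⟩ hst
  have hprod : s * t < c := by
    calc s * t ≤ s * √c := mul_le_mul_of_nonneg_left ht_le hs.le
      _ < √c * √c := mul_lt_mul_of_pos_right (hst.trans_le ht_le) (ht.trans_le ht_le)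
      _ = c := Real.mul_self_sqrt hc
  have hdiff := add_div_sub_add_div_eq c hs.ne' ht.ne'
  have : (t - s) * (s * t - c) / (s * t) < 0 :=
    div_neg_of_neg_of_pos (mul_neg_of_pos_of_neg (by linarith) (by linarith)) (by positivity)
  linarith

lemma strictMonoOn_add_div_Ici_sqrt {c : ℝ} (hc : 0 < c) :
    StrictMonoOn (fun t => t + c / t) (Ici √c) := by
  intro s hs t ht hst
  have hs0 : 0 < s := (Real.sqrt_pos.2 hc).trans_le hs
  have hprod : c < s * t := by
    calc c = √c * √c := (Real.mul_self_sqrt hc.le).symm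
      _ < s * t := mul_lt_mul' hs (hs.trans_lt hst) (Real.sqrt_nonneg c) hs0
  have hdiff := add_div_sub_add_div_eq c hs0.ne' (hs0.trans hst).ne'
  have : 0 < (t - s) * (s * t - c) / (s * t) :=
    div_pos (mul_pos (by linarith) (by linarith)) (mul_pos hs0 (hs0.trans hst))
  linarith

theorem stmt_15
    (S : ℝ) (hS : 1 < S)
    (g : ℝ → ℝ)
    (hg : g = fun y => 1 + (S - 1) * y - S / (S - (S - 1) * y))
    (ystar : ℝ) (hystar : ystar = (S - Real.sqrt S) / (S - 1)) :
    StrictMonoOn g (Set.Icc (0 : ℝ) ystar) ∧ StrictAntiOn g (Set.Icc ystar 1) := by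
  set D : ℝ → ℝ := fun y => S - (S - 1) * y
  set φ : ℝ → ℝ := fun t => 1 + S - (t + S / t)
  have hg_comp : g = φ ∘ D := by
    subst hg
    funext y
    simp only [Function.comp, φ, D]
    ring
  have hD_anti : StrictAnti D := fun a b hab => by
    simp only [D]; nlinarith
  have hD_ystar : D ystar = √S := by
    have : S - 1 ≠ 0 := by linarith
    simp only [D, hystar]
    field_simp
    ring
  rw [hg_comp]
  constructor
  · refine (strictMonoOn_add_div_Ici_sqrt (by linarith)).neg.const_add (1 + S) |>.comp
      (hD_anti.strictAntiOn _) (fun y hy => ?_)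
    simpa [hD_ystar] using hD_anti.antitone hy.2
  · refine (strictAntiOn_add_div_Ioc_sqrt (by linarith)).neg.const_add (1 + S) |>.comp_strictAntiOn
      (hD_anti.strictAntiOn _) (fun y hy => ⟨?_, ?_⟩)
    · have : D 1 ≤ D y := hD_anti.antitone hy.2
      simp only [D] at this ⊢
      linarith
    · simpa [hD_ystar] using hD_anti.antitone hy.1
end
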